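/- arXiv:1306.5277 — 3 statements merged into one kernel-verified Lean document; each statement's English description precedes it below -/
import Mathlib

section
/- Let r = q^2 with q odd, N | r − 1, 2N | q + 1, α a primitive element of F_r, and a ∈ ⟨α^N⟩ nonzero. Then the number of z in the subgroup ⟨α^N⟩ with Tr_{r/q}(a z) = 0 equals q − 1; and if a ∈ F_r^* is not in ⟨α^N⟩, there is no z ∈ ⟨α^N⟩ with Tr_{r/q}(a z) = 0. -/
open Polynomial

/-- Fixed points of `x ↦ x^q` in `L` are exactly the image of `K`. -/
private lemma fixed_pts_aux (K L : Type*) [Field K] [Field L] [Fintype K] [Fintype L]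
    [Algebra K L] (x : L) (hx : x ^ Fintype.card K = x) :
    ∃ k : K, algebraMap K L k = x := by
  classical
  set q := Fintype.card K with hq
  have hq1 : 1 < q := Fintype.one_lt_card
  set P : L[X] := X ^ q - X with hP
  have hPne : P ≠ 0 := FiniteField.X_pow_card_sub_X_ne_zero L hq1
  have hPdeg : P.natDegree = q := FiniteField.X_pow_card_sub_X_natDegree_eq L hq1
  set T : Finset L := Finset.univ.image (algebraMap K L) with hT
  have hTcard : T.card = q := by
    rw [hT, Finset.card_image_of_injective _ (algebraMap K L).injective, Finset.card_univ]
  have hTsub : T ⊆ P.roots.toFinset := by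
    intro t ht
    obtain ⟨k, -, rfl⟩ := Finset.mem_image.mp ht
    rw [Multiset.mem_toFinset, mem_roots hPne]
    simp only [IsRoot, hP, eval_sub, eval_pow, eval_X, sub_eq_zero, ← map_pow, hq,
      FiniteField.pow_card]
  have hRcard : P.roots.toFinset.card ≤ q := by
    calc P.roots.toFinset.card ≤ Multiset.card P.roots := Multiset.toFinset_card_le _
    _ ≤ P.natDegree := P.card_roots'
    _ = q := hPdeg
  have hTR : T = P.roots.toFinset :=
    Finset.eq_of_subset_of_card_le hTsub (by rw [hTcard]; exact hRcard)
  have hxR : x ∈ P.roots.toFinset := by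
    rw [Multiset.mem_toFinset, mem_roots hPne]
    simp only [IsRoot, hP, eval_sub, eval_pow, eval_X, sub_eq_zero, hx]
  rw [← hTR] at hxR
  obtain ⟨k, -, hk⟩ := Finset.mem_image.mp hxR
  exact ⟨k, hk⟩

/-- For `card L = (card K)^2`, `Tr x = 0 ↔ x + x^q = 0`. -/
private lemma trace_char_aux (K L : Type*) [Field K] [Field L] [Fintype K] [Fintype L]
    [Algebra K L] (hr : Fintype.card L = Fintype.card K ^ 2) (x : L) :
    Algebra.trace K L x = 0 ↔ x + x ^ Fintype.card K = 0 := by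
  classical
  set q := Fintype.card K with hq
  have hq1 : 1 < q := Fintype.one_lt_card
  obtain ⟨p, hp⟩ := CharP.exists K
  haveI : CharP K p := hp
  haveI : Fact p.Prime := ⟨CharP.char_is_prime K p⟩
  haveI : CharP L p := charP_of_injective_algebraMap' (A := L) K p
  obtain ⟨n, -, hn⟩ := FiniteField.card K p
  haveI : FiniteDimensional K L := Module.Finite.of_finite
  have hrank : Module.finrank K L = 2 := by
    have h := Module.card_eq_pow_finrank (K := K) (V := L)
    rw [hr] at h
    exact (Nat.pow_right_injective hq1 h.symm)
  -- the Frobenius `x ↦ x ^ q` as an algebra equivalence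
  let φ : L →ₐ[K] L :=
    { toRingHom := iterateFrobenius L p n
      commutes' := fun a => by
        show iterateFrobenius L p n (algebraMap K L a) = algebraMap K L a
        rw [iterateFrobenius_def, ← map_pow, ← hn, FiniteField.pow_card] }
  have hφbij : Function.Bijective φ :=
    Finite.injective_iff_bijective.mp φ.toRingHom.injective
  let σ : L ≃ₐ[K] L := AlgEquiv.ofBijective φ hφbij
  have hσ : ∀ y : L, σ y = y ^ q := fun y => by
    show φ y = y ^ q
    simp only [φ, AlgHom.coe_mk, iterateFrobenius_def, ← hn, ← hq]
  have hσne : σ ≠ 1 := by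
    intro h
    have hns : ¬ Function.Surjective (algebraMap K L) := by
      intro hs
      have hle := Fintype.card_le_of_surjective _ hs
      rw [hr] at hle
      nlinarith
    apply hns
    intro y
    have hy : σ y = y := by rw [h]; rfl
    rw [hσ] at hy
    obtain ⟨k, hk⟩ := fixed_pts_aux K L y hy
    exact ⟨k, hk⟩
  have hcardG : Fintype.card (L ≃ₐ[K] L) = 2 := by
    rw [← Nat.card_eq_fintype_card, IsGalois.card_aut_eq_finrank, hrank]
  have huniv : (Finset.univ : Finset (L ≃ₐ[K] L)) = {1, σ} := by
    symm
    apply Finset.eq_univ_of_card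
    rw [Finset.card_pair (Ne.symm hσne), hcardG]
  have key : algebraMap K L (Algebra.trace K L x) = x + x ^ q := by
    rw [trace_eq_sum_automorphisms, huniv, Finset.sum_pair (Ne.symm hσne)]
    rw [hσ]
    rfl
  constructor
  · intro h
    rw [← key, h, map_zero]
  · intro h
    have : algebraMap K L (Algebra.trace K L x) = 0 := by rw [key, h]
    exact (algebraMap K L).injective (by rw [this, map_zero])

/-- Let `r = q²` with `q` odd, `N ∣ r - 1`, `2N ∣ q + 1`, `α` primitive in
`F_r`.  If `a ∈ ⟨α^N⟩` then there are exactly `q - 1` elements `z ∈ ⟨α^N⟩`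
with `Tr_{r/q}(a z) = 0`; if `a ∉ ⟨α^N⟩` there are none. -/
theorem count_trace_zero_in_Npowers
    (K L : Type*) [Field K] [Field L] [Fintype K] [Fintype L] [Algebra K L]
    (hr : Fintype.card L = Fintype.card K ^ 2) (hodd : Odd (Fintype.card K))
    (α : Lˣ) (hα : ∀ x : Lˣ, x ∈ Subgroup.zpowers α)
    (N : ℕ) (hN : 0 < N) (hNdvd : N ∣ Fintype.card L - 1)
    (hdvd : 2 * N ∣ Fintype.card K + 1) (a : Lˣ) :
    (a ∈ Subgroup.zpowers (α ^ N) →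
      {z : Lˣ | z ∈ Subgroup.zpowers (α ^ N) ∧
          Algebra.trace K L ((a : L) * (z : L)) = 0}.ncard
        = Fintype.card K - 1) ∧
    (a ∉ Subgroup.zpowers (α ^ N) →
      ∀ z : Lˣ, z ∈ Subgroup.zpowers (α ^ N) →
        Algebra.trace K L ((a : L) * (z : L)) ≠ 0) := by
  classical
  set q := Fintype.card K with hq
  have hq1 : 1 < q := Fintype.one_lt_card
  obtain ⟨k, hk⟩ := hodd
  have hq3 : 3 ≤ q := by omega
  have hcardU : Fintype.card Lˣ = q ^ 2 - 1 := by rw [Fintype.card_units, hr]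
  have hordα : orderOf α = q ^ 2 - 1 := by
    rw [orderOf_eq_card_of_forall_mem_zpowers hα, Nat.card_eq_fintype_card, hcardU]
  set S := Subgroup.zpowers (α ^ N) with hS
  -- the embedding of Kˣ into Lˣ
  set e : Kˣ →* Lˣ := Units.map (algebraMap K L).toMonoidHom with he
  have he_inj : Function.Injective e := Units.map_injective (algebraMap K L).injective
  have he_pow : ∀ v : Kˣ, (e v) ^ (q - 1) = 1 := by
    intro v
    rw [← map_pow]
    have hv : v ^ (q - 1) = 1 := by
      rw [← Fintype.card_units]; exact pow_card_eq_one
    rw [hv, map_one]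
  have hNq1 : N ∣ q + 1 := dvd_trans (dvd_mul_left N 2) hdvd
  -- any unit killed by q-1 lies in S
  have memS_of_pow : ∀ x : Lˣ, x ^ (q - 1) = 1 → x ∈ S := by
    intro x hx
    obtain ⟨j, hj⟩ := Subgroup.mem_zpowers_iff.mp (hα x)
    have h1 : α ^ (j * ((q : ℤ) - 1)) = 1 := by
      rw [zpow_mul, hj]
      have hcast : ((q : ℤ) - 1) = ((q - 1 : ℕ) : ℤ) := by push_cast [hq1.le]; ring
      rw [hcast, zpow_natCast, hx]
    have h2 : ((orderOf α : ℤ)) ∣ j * ((q : ℤ) - 1) := orderOf_dvd_iff_zpow_eq_one.mpr h1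
    rw [hordα] at h2
    have h3 : ((q : ℤ) + 1) * ((q : ℤ) - 1) ∣ j * ((q : ℤ) - 1) := by
      have hcast : ((q ^ 2 - 1 : ℕ) : ℤ) = ((q : ℤ) + 1) * ((q : ℤ) - 1) := by
        have h1q : (1 : ℕ) ≤ q ^ 2 := Nat.one_le_pow _ _ (by omega)
        push_cast [h1q]
        ring
      rwa [hcast] at h2
    have h4 : ((q : ℤ) + 1) ∣ j :=
      (mul_dvd_mul_iff_right (by omega : ((q : ℤ) - 1) ≠ 0)).mp h3
    have h5 : ((N : ℤ)) ∣ j := by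
      refine dvd_trans ?_ h4
      exact_mod_cast Int.natCast_dvd_natCast.mpr hNq1
    obtain ⟨m, hm⟩ := h5
    refine Subgroup.mem_zpowers_iff.mpr ⟨m, ?_⟩
    rw [← zpow_natCast α N, ← zpow_mul, ← hm, hj]
  have heS : ∀ v : Kˣ, e v ∈ S := fun v => memS_of_pow _ (he_pow v)
  -- the special element c = α ^ ((q+1)/2)
  set c : Lˣ := α ^ ((q + 1) / 2) with hc
  have hcS : c ∈ S := by
    obtain ⟨m, hm⟩ := hdvd
    have h2 : (q + 1) / 2 = N * m := by
      obtain ⟨w, hw⟩ : ∃ w, N * m = w := ⟨_, rfl⟩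
      rw [hw]
      rw [show 2 * N * m = 2 * w by rw [← hw]; ring] at hm
      omega
    rw [hc, h2, pow_mul]
    exact Subgroup.pow_mem _ (Subgroup.mem_zpowers _) m
  -- c ^ (q-1) = -1
  have hc_pow : c ^ (q - 1) = -1 := by
    set E := ((q + 1) / 2) * (q - 1) with hE
    have htE : c ^ (q - 1) = α ^ E := by rw [hc, ← pow_mul]
    have h1 : E = (k + 1) * (2 * k) := by
      have e1 : (q + 1) / 2 = k + 1 := by omega
      have e2 : q - 1 = 2 * k := by omega
      rw [hE, e1, e2]
    have h2E : 2 * E = q ^ 2 - 1 := by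
      rw [h1, hk]
      have h : (2 * k + 1) ^ 2 = 2 * ((k + 1) * (2 * k)) + 1 := by ring
      rw [h]
      simp
    have hEpos : 0 < E := by
      rw [h1]
      exact Nat.mul_pos (by omega) (by omega)
    have hElt : E < q ^ 2 - 1 := by
      calc E < 2 * E := by omega
      _ = q ^ 2 - 1 := h2E
    have hsq : (α ^ E) ^ 2 = 1 := by
      rw [← pow_mul, mul_comm, h2E, ← hordα, pow_orderOf_eq_one]
    have hne1 : α ^ E ≠ 1 := by
      intro h
      have hdvd' := orderOf_dvd_of_pow_eq_one h
      rw [hordα] at hdvd'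
      exact absurd hElt (not_lt.mpr (Nat.le_of_dvd hEpos hdvd'))
    have hval : ((α ^ E : Lˣ) : L) = -1 := by
      have h1' : ((α ^ E : Lˣ) : L) * ((α ^ E : Lˣ) : L) = 1 := by
        rw [← Units.val_mul, ← sq, hsq, Units.val_one]
      rcases mul_self_eq_one_iff.mp h1' with h | h
      · exact absurd (Units.ext h) hne1
      · exact h
    rw [htE]
    exact Units.ext (by rw [hval, Units.val_neg, Units.val_one])
  -- characterization of the trace condition
  have hkey : ∀ x : Lˣ, (Algebra.trace K L (x : L) = 0 ↔ ∃ v : Kˣ, x = c * e v) := by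
    intro x
    rw [trace_char_aux K L hr]
    have hxq : (x : L) ^ q = (x : L) * (x : L) ^ (q - 1) := by
      conv_lhs => rw [show q = (q - 1) + 1 by omega]
      rw [pow_succ']
    constructor
    · intro h
      have hxu : x ^ (q - 1) = (-1 : Lˣ) := by
        have hL : (x : L) ^ (q - 1) = -1 := by
          have h2 : (x : L) * (1 + (x : L) ^ (q - 1)) = 0 := by
            rw [mul_add, mul_one, ← hxq]; exact h
          rcases mul_eq_zero.mp h2 with h3 | h3
          · exact absurd h3 (Units.ne_zero x)
          · linear_combination h3
        exact Units.ext (by rw [Units.val_pow_eq_pow_val, hL, Units.val_neg, Units.val_one])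
      have hy : (x * c⁻¹) ^ (q - 1) = 1 := by
        rw [mul_pow, hxu, inv_pow, hc_pow]
        simp
      have hyL : ((x * c⁻¹ : Lˣ) : L) ^ q = ((x * c⁻¹ : Lˣ) : L) := by
        have h1' : ((x * c⁻¹ : Lˣ) : L) ^ (q - 1) = 1 := by
          rw [← Units.val_pow_eq_pow_val, hy, Units.val_one]
        conv_lhs => rw [show q = (q - 1) + 1 by omega]
        rw [pow_succ, h1', one_mul]
      obtain ⟨w, hw⟩ := fixed_pts_aux K L _ hyL
      have hw0 : w ≠ 0 := by
        intro h0
        rw [h0, map_zero] at hw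
        exact Units.ne_zero (x * c⁻¹) hw.symm
      refine ⟨Units.mk0 w hw0, ?_⟩
      have hev : e (Units.mk0 w hw0) = x * c⁻¹ := by
        apply Units.ext
        simpa [he] using hw
      rw [hev, mul_comm x c⁻¹, mul_inv_cancel_left]
    · rintro ⟨v, rfl⟩
      have hpow : ((c * e v : Lˣ) : L) ^ (q - 1) = -1 := by
        rw [← Units.val_pow_eq_pow_val, mul_pow, hc_pow, he_pow, mul_one,
          Units.val_neg, Units.val_one]
      rw [hxq, hpow]
      ring
  constructor
  · -- a ∈ S : count is q - 1
    intro haS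
    have hinj : Function.Injective (fun v : Kˣ => a⁻¹ * (c * e v)) := by
      intro v w h
      simp only at h
      exact he_inj (mul_left_cancel (mul_left_cancel h))
    have hset : {z : Lˣ | z ∈ S ∧ Algebra.trace K L ((a : L) * (z : L)) = 0}
        = (fun v : Kˣ => a⁻¹ * (c * e v)) '' Set.univ := by
      ext z
      simp only [Set.mem_setOf_eq, Set.image_univ, Set.mem_range]
      constructor
      · rintro ⟨hzS, htr⟩
        have htr' : Algebra.trace K L ((a * z : Lˣ) : L) = 0 := by
          rwa [Units.val_mul]
        obtain ⟨v, hv⟩ := (hkey (a * z)).mp htr'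
        exact ⟨v, by rw [← hv, inv_mul_cancel_left]⟩
      · rintro ⟨v, rfl⟩
        refine ⟨Subgroup.mul_mem _ (Subgroup.inv_mem _ haS)
          (Subgroup.mul_mem _ hcS (heS v)), ?_⟩
        have hprod : a * (a⁻¹ * (c * e v)) = c * e v := mul_inv_cancel_left a _
        have h2 := (hkey (a * (a⁻¹ * (c * e v)))).mpr ⟨v, hprod⟩
        rwa [Units.val_mul] at h2
    rw [hset, Set.ncard_image_of_injective _ hinj, Set.ncard_univ,
      Nat.card_eq_fintype_card, Fintype.card_units]
  · -- a ∉ S : no solutions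
    intro haS z hzS htr
    have htr' : Algebra.trace K L ((a * z : Lˣ) : L) = 0 := by rwa [Units.val_mul]
    obtain ⟨v, hv⟩ := (hkey (a * z)).mp htr'
    apply haS
    have ha : a = c * e v * z⁻¹ := by rw [← hv, mul_inv_cancel_right]
    rw [ha]
    exact Subgroup.mul_mem _ (Subgroup.mul_mem _ hcS (heS v)) (Subgroup.inv_mem _ hzS)
end

section
/- Let r = q^2 with q odd, 2N | q + 1, α primitive in F_r, and a ∈ ⟨α^N⟩ nonzero. Then the set of b ∈ F_r^* with Tr_{r/q}(b a^{-2}) = 0 equals {a^2 α^{(q+1)/2} v : v ∈ F_q^*}; all such b lie in the coset α^{(q+1)/2}⟨α^{2N}⟩, which equals ⟨α^{2N}⟩ if (q+1)/(2N) is even and equals α^N⟨α^{2N}⟩ if (q+1)/(2N) is odd. -/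
open scoped Pointwise


lemma fixed_field_aux (K L : Type*) [Field K] [Field L] [Fintype K] [Fintype L] [Algebra K L]
    {z : L} (hz : z ^ Fintype.card K = z) : z ∈ Set.range (algebraMap K L) := by
  classical
  have hq : 1 < Fintype.card K := Fintype.one_lt_card
  by_contra h
  have hPne : (Polynomial.X ^ Fintype.card K - Polynomial.X : Polynomial L) ≠ 0 :=
    FiniteField.X_pow_card_sub_X_ne_zero L hq
  have hroot : ∀ w : L, w ^ Fintype.card K = w →
      w ∈ (Polynomial.X ^ Fintype.card K - Polynomial.X : Polynomial L).roots.toFinset := by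
    intro w hw
    rw [Multiset.mem_toFinset, Polynomial.mem_roots hPne]
    simp [Polynomial.IsRoot, hw]
  set T : Finset L := Finset.univ.image (algebraMap K L) with hT
  have hsub : insert z T ⊆
      (Polynomial.X ^ Fintype.card K - Polynomial.X : Polynomial L).roots.toFinset := by
    intro w hw
    rcases Finset.mem_insert.mp hw with rfl | hw
    · exact hroot _ hz
    · obtain ⟨k, _, rfl⟩ := Finset.mem_image.mp hw
      exact hroot _ (by rw [← map_pow, FiniteField.pow_card])
  have hzT : z ∉ T := by
    intro hzT
    obtain ⟨k, _, rfl⟩ := Finset.mem_image.mp hzT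
    exact h ⟨k, rfl⟩
  have hcardT : T.card = Fintype.card K := by
    rw [hT, Finset.card_image_of_injective _ (algebraMap K L).injective, Finset.card_univ]
  have h1 := Finset.card_le_card hsub
  rw [Finset.card_insert_of_notMem hzT, hcardT] at h1
  have h2 := (Multiset.toFinset_card_le
      (Polynomial.X ^ Fintype.card K - Polynomial.X : Polynomial L).roots).trans
    ((Polynomial.card_roots' _).trans_eq (FiniteField.X_pow_card_sub_X_natDegree_eq L hq))
  omega

lemma trace_formula_aux (K L : Type*) [Field K] [Field L] [Fintype K] [Fintype L] [Algebra K L]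
    (hr : Fintype.card L = Fintype.card K ^ 2) (x : L) :
    algebraMap K L (Algebra.trace K L x) = x + x ^ Fintype.card K := by
  classical
  have hq : 1 < Fintype.card K := Fintype.one_lt_card
  have hrank : Module.finrank K L = 2 := by
    have hc := Module.card_eq_pow_finrank (K := K) (V := L)
    rw [hr] at hc
    exact (Nat.pow_right_injective hq hc.symm)
  obtain ⟨p, hp⟩ := CharP.exists K
  haveI := hp
  obtain ⟨n, hpp, hcard⟩ := FiniteField.card K p
  haveI : Fact p.Prime := ⟨hpp⟩
  haveI : CharP L p := charP_of_injective_algebraMap (algebraMap K L).injective p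
  haveI : ExpChar L p := .prime hpp
  let A : L →ₐ[K] L :=
    { toRingHom := iterateFrobenius L p n
      commutes' := fun k => by
        show iterateFrobenius L p n (algebraMap K L k) = algebraMap K L k
        rw [iterateFrobenius_def, ← map_pow, ← hcard, FiniteField.pow_card] }
  have hAbij : Function.Bijective A :=
    Finite.injective_iff_bijective.mp A.toRingHom.injective
  let φ : L ≃ₐ[K] L := AlgEquiv.ofBijective A hAbij
  have hφ : ∀ y : L, φ y = y ^ Fintype.card K := by
    intro y
    show iterateFrobenius L p n y = y ^ Fintype.card K
    rw [iterateFrobenius_def, hcard]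
  have hne : (1 : L ≃ₐ[K] L) ≠ φ := by
    intro hid
    have hall : ∀ y : L, y ^ Fintype.card K = y := by
      intro y
      have := congrArg (fun σ : L ≃ₐ[K] L => σ y) hid
      simpa [hφ] using this.symm
    have hsub : (Finset.univ : Finset L) ⊆
        (Polynomial.X ^ Fintype.card K - Polynomial.X : Polynomial L).roots.toFinset := by
      intro w _
      rw [Multiset.mem_toFinset,
        Polynomial.mem_roots (FiniteField.X_pow_card_sub_X_ne_zero L hq)]
      simp [Polynomial.IsRoot, hall w]
    have h1 := Finset.card_le_card hsub
    rw [Finset.card_univ, hr] at h1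
    have h2 := (Multiset.toFinset_card_le
        (Polynomial.X ^ Fintype.card K - Polynomial.X : Polynomial L).roots).trans
      ((Polynomial.card_roots' _).trans_eq (FiniteField.X_pow_card_sub_X_natDegree_eq L hq))
    nlinarith
  have hcard2 : Fintype.card (L ≃ₐ[K] L) = 2 := by
    rw [← Nat.card_eq_fintype_card, IsGalois.card_aut_eq_finrank, hrank]
  have huniv : (Finset.univ : Finset (L ≃ₐ[K] L)) = {1, φ} := by
    symm
    apply Finset.eq_of_subset_of_card_le (Finset.subset_univ _)
    rw [Finset.card_univ, hcard2, Finset.card_pair hne]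
  rw [trace_eq_sum_automorphisms, huniv, Finset.sum_pair hne]
  simp [hφ]

/-- Let `r = q²` with `q` odd, `2N ∣ q + 1`, `α` primitive in `F_r`, and
`a ∈ ⟨α^N⟩`.  The set of `b ∈ F_r^*` with `Tr_{r/q}(b a⁻²) = 0` is
`{a² α^{(q+1)/2} v : v ∈ F_q^*}`; all such `b` lie in the coset
`α^{(q+1)/2}⟨α^{2N}⟩`, which equals `⟨α^{2N}⟩` if `(q+1)/(2N)` is even and
`α^N⟨α^{2N}⟩` if `(q+1)/(2N)` is odd. -/
theorem trace_zero_b_solutions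
    (K L : Type*) [Field K] [Field L] [Fintype K] [Fintype L] [Algebra K L]
    (hr : Fintype.card L = Fintype.card K ^ 2) (hodd : Odd (Fintype.card K))
    (α : Lˣ) (hα : ∀ x : Lˣ, x ∈ Subgroup.zpowers α)
    (N : ℕ) (hN : 0 < N) (hdvd : 2 * N ∣ Fintype.card K + 1)
    (a : Lˣ) (ha : a ∈ Subgroup.zpowers (α ^ N)) :
    ({b : Lˣ | Algebra.trace K L ((b : L) * ((a⁻¹ : Lˣ) : L) ^ 2) = 0}
        = (fun v : Kˣ =>
            a ^ 2 * α ^ ((Fintype.card K + 1) / 2) *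
              Units.map (algebraMap K L : K →* L) v) '' Set.univ) ∧
    ({b : Lˣ | Algebra.trace K L ((b : L) * ((a⁻¹ : Lˣ) : L) ^ 2) = 0}
        ⊆ (α ^ ((Fintype.card K + 1) / 2)) •
            (Subgroup.zpowers (α ^ (2 * N)) : Set Lˣ)) ∧
    (Even ((Fintype.card K + 1) / (2 * N)) →
      (α ^ ((Fintype.card K + 1) / 2)) •
          (Subgroup.zpowers (α ^ (2 * N)) : Set Lˣ)
        = (Subgroup.zpowers (α ^ (2 * N)) : Set Lˣ)) ∧
    (Odd ((Fintype.card K + 1) / (2 * N)) →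
      (α ^ ((Fintype.card K + 1) / 2)) •
          (Subgroup.zpowers (α ^ (2 * N)) : Set Lˣ)
        = (α ^ N) • (Subgroup.zpowers (α ^ (2 * N)) : Set Lˣ)) := by
  classical
  have hq1 : 1 < Fintype.card K := Fintype.one_lt_card
  set q := Fintype.card K with hqdef
  obtain ⟨s, hs⟩ : 2 ∣ q + 1 := (dvd_mul_right 2 N).trans hdvd
  have hs2 : (q + 1) / 2 = s := by omega
  have hm : 2 * N * ((q + 1) / (2 * N)) = q + 1 := Nat.mul_div_cancel' hdvd
  have hordα : orderOf α = q ^ 2 - 1 := by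
    rw [orderOf_eq_card_of_forall_mem_zpowers hα, Nat.card_eq_fintype_card, Fintype.card_units, hr]
  -- arithmetic : q^2 - 1 = 2 * (s * (q - 1))
  have e2 : (q + 1) * (q - 1) = q * q - 1 := by
    obtain ⟨m, hm'⟩ : ∃ m, q = m + 2 := ⟨q - 2, by omega⟩
    rw [hm']
    have h0 : m + 2 - 1 = m + 1 := by omega
    have h1 : (m + 2 + 1) * (m + 2 - 1) = m * m + 4 * m + 3 := by rw [h0]; ring
    have h2 : (m + 2) * (m + 2) = m * m + 4 * m + 4 := by ring
    omega
  have hq2 : q ^ 2 - 1 = 2 * (s * (q - 1)) := by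
    have h3 : (q + 1) * (q - 1) = 2 * (s * (q - 1)) := by rw [hs]; ring
    rw [sq]
    omega
  -- α ^ (s * (q-1)) = -1
  have hm1 : ((α ^ (s * (q - 1)) : Lˣ) : L) = -1 := by
    have hsq : ((α ^ (s * (q - 1)) : Lˣ)) ^ 2 = 1 := by
      rw [← pow_mul]
      apply orderOf_dvd_iff_pow_eq_one.mp
      rw [hordα, hq2]
      exact ⟨1, by ring⟩
    have hne1 : (α ^ (s * (q - 1)) : Lˣ) ≠ 1 := by
      intro h1
      have hd := orderOf_dvd_of_pow_eq_one h1
      rw [hordα] at hd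
      have hpos : 0 < s * (q - 1) := by
        exact Nat.mul_pos (by omega) (by omega)
      have := Nat.le_of_dvd hpos hd
      omega
    have hmul : ((α ^ (s * (q - 1)) : Lˣ) : L) * ((α ^ (s * (q - 1)) : Lˣ) : L) = 1 := by
      rw [← Units.val_mul, ← sq, hsq, Units.val_one]
    rcases mul_self_eq_one_iff.mp hmul with h | h
    · exact absurd (Units.ext (by rw [h, Units.val_one])) hne1
    · exact h
  -- the key element c
  set cL : L := ((α ^ ((q + 1) / 2) : Lˣ) : L) with hcL
  have hcLpow : cL = ((α : L)) ^ s := by rw [hcL, hs2, Units.val_pow_eq_pow_val]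
  have hcne : cL ≠ 0 := Units.ne_zero _
  have hcq' : cL ^ q = -cL := by
    have h1 : cL ^ (q - 1) = -1 := by
      rw [hcLpow, ← pow_mul, ← Units.val_pow_eq_pow_val]
      exact hm1
    have hq' : q = (q - 1) + 1 := by omega
    rw [hq', pow_succ, h1]
    ring
  have hvbar : ∀ v : K, (algebraMap K L v) ^ q = algebraMap K L v := by
    intro v
    rw [← map_pow, FiniteField.pow_card]
  have key : ∀ x : L, Algebra.trace K L x = 0 ↔ x + x ^ q = 0 := by
    intro x
    constructor
    · intro h
      have h2 := trace_formula_aux K L hr x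
      rw [h, map_zero] at h2
      exact h2.symm
    · intro h
      apply (algebraMap K L).injective
      rw [map_zero, trace_formula_aux K L hr x]
      exact h
  -- first conjunct
  have hset : {b : Lˣ | Algebra.trace K L ((b : L) * ((a⁻¹ : Lˣ) : L) ^ 2) = 0}
      = (fun v : Kˣ =>
          a ^ 2 * α ^ ((q + 1) / 2) *
            Units.map (algebraMap K L : K →* L) v) '' Set.univ := by
    ext b
    simp only [Set.mem_setOf_eq, Set.image_univ, Set.mem_range]
    constructor
    · intro hb
      set x : Lˣ := b * (a⁻¹) ^ 2 with hx
      have hxL : (x : L) = (b : L) * ((a⁻¹ : Lˣ) : L) ^ 2 := by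
        rw [hx, Units.val_mul, Units.val_pow_eq_pow_val]
      have hx0 : (x : L) + (x : L) ^ q = 0 := by
        rw [hxL]
        exact (key _).mp hb
      have hxq : (x : L) ^ q = -(x : L) := by linear_combination hx0
      have hy : ((x : L) / cL) ^ q = (x : L) / cL := by
        rw [div_pow, hxq, hcq', neg_div_neg_eq]
      obtain ⟨w, hw⟩ := fixed_field_aux K L hy
      have hw0 : w ≠ 0 := by
        intro h0
        rw [h0, map_zero] at hw
        exact (div_ne_zero (Units.ne_zero x) hcne) hw.symm
      refine ⟨Units.mk0 w hw0, ?_⟩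
      apply Units.ext
      simp only [Units.val_mul, Units.val_pow_eq_pow_val, Units.coe_map,
        MonoidHom.coe_coe, Units.val_mk0]
      rw [hw, mul_assoc]
      have hcL2 : ((α : L)) ^ ((q + 1) / 2) = cL := by
        rw [hcL, Units.val_pow_eq_pow_val]
      have hcx : cL * ((x : L) / cL) = (x : L) := by
        rw [mul_comm, div_mul_cancel₀ _ hcne]
      rw [hcL2, hcx, hxL]
      have hai : (a : L) * ((a⁻¹ : Lˣ) : L) = 1 := Units.mul_inv a
      calc (a : L) ^ 2 * ((b : L) * ((a⁻¹ : Lˣ) : L) ^ 2)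
          = ((a : L) * ((a⁻¹ : Lˣ) : L)) ^ 2 * (b : L) := by ring
        _ = (b : L) := by rw [hai, one_pow, one_mul]
    · rintro ⟨v, rfl⟩
      have hai : (a : L) * ((a⁻¹ : Lˣ) : L) = 1 := Units.mul_inv a
      have hbx : ((a ^ 2 * α ^ ((q + 1) / 2) *
          Units.map (algebraMap K L : K →* L) v : Lˣ) : L) * ((a⁻¹ : Lˣ) : L) ^ 2
          = cL * algebraMap K L (v : K) := by
        simp only [Units.val_mul, Units.val_pow_eq_pow_val, Units.coe_map, MonoidHom.coe_coe]
        calc (a : L) ^ 2 * ((α : L)) ^ ((q + 1) / 2) * algebraMap K L (v : K) *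
              ((a⁻¹ : Lˣ) : L) ^ 2
            = ((a : L) * ((a⁻¹ : Lˣ) : L)) ^ 2 *
                (((α : L)) ^ ((q + 1) / 2) * algebraMap K L (v : K)) := by ring
          _ = cL * algebraMap K L (v : K) := by
              rw [hai, one_pow, one_mul, hcL, Units.val_pow_eq_pow_val]
      rw [hbx, key]
      rw [mul_pow, hcq', hvbar]
      ring
  -- membership lemmas
  have ha2 : a ^ 2 ∈ Subgroup.zpowers (α ^ (2 * N)) := by
    obtain ⟨k, hk⟩ := ha
    refine Subgroup.mem_zpowers_iff.mpr ⟨k, ?_⟩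
    rw [← hk]
    rw [show α ^ (2 * N) = (α ^ N) ^ 2 by rw [← pow_mul, mul_comm]]
    group
  have hvmem : ∀ v : Kˣ,
      Units.map (algebraMap K L : K →* L) v ∈ Subgroup.zpowers (α ^ (2 * N)) := by
    intro v
    obtain ⟨k, hk⟩ := hα (Units.map (algebraMap K L : K →* L) v)
    have hv1 : (Units.map (algebraMap K L : K →* L) v) ^ (q - 1) = 1 := by
      rw [← map_pow]
      have hv2 : v ^ (q - 1) = 1 := by
        have h7 : v ^ Fintype.card Kˣ = 1 := pow_card_eq_one
        rwa [Fintype.card_units] at h7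
      rw [hv2, map_one]
    rw [← hk, ← zpow_natCast, ← zpow_mul] at hv1
    have hdvd2 : ((q ^ 2 - 1 : ℕ) : ℤ) ∣ k * ((q : ℤ) - 1) := by
      have hd := orderOf_dvd_iff_zpow_eq_one.mpr hv1
      rw [hordα] at hd
      have : ((q - 1 : ℕ) : ℤ) = (q : ℤ) - 1 := by
        push_cast [Nat.cast_sub hq1.le]; ring
      rwa [this] at hd
    have hdvd3 : ((q : ℤ) + 1) ∣ k := by
      have hfac : ((q ^ 2 - 1 : ℕ) : ℤ) = ((q : ℤ) + 1) * ((q : ℤ) - 1) := by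
        have : (1 : ℕ) ≤ q ^ 2 := Nat.one_le_pow _ _ (by omega)
        push_cast [Nat.cast_sub this]
        ring
      rw [hfac] at hdvd2
      have hne : ((q : ℤ) - 1) ≠ 0 := by
        have : (1 : ℤ) < (q : ℤ) := by exact_mod_cast hq1
        omega
      exact (mul_dvd_mul_iff_right hne).mp hdvd2
    obtain ⟨t, ht⟩ := hdvd3
    refine Subgroup.mem_zpowers_iff.mpr ⟨(((q + 1) / (2 * N) : ℕ) : ℤ) * t, ?_⟩
    have h5 : (α ^ (2 * N)) ^ ((((q + 1) / (2 * N) : ℕ)) : ℤ) = α ^ (((q + 1 : ℕ)) : ℤ) := by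
      rw [← zpow_natCast α (2 * N), ← zpow_mul, ← Nat.cast_mul, hm]
    have h6 : ((q + 1 : ℕ) : ℤ) = (q : ℤ) + 1 := by push_cast; ring
    calc (α ^ (2 * N)) ^ ((((q + 1) / (2 * N) : ℕ) : ℤ) * t)
        = ((α ^ (2 * N)) ^ ((((q + 1) / (2 * N) : ℕ)) : ℤ)) ^ t := by rw [zpow_mul]
      _ = (α ^ (((q + 1 : ℕ)) : ℤ)) ^ t := by rw [h5]
      _ = α ^ ((((q + 1 : ℕ)) : ℤ) * t) := by rw [← zpow_mul]
      _ = Units.map (algebraMap K L : K →* L) v := by rw [h6, ← ht]; exact hk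
  have husmul : ∀ u w : Lˣ, u • w = u * w := by
    intro u w
    apply Units.ext
    rw [smul_eq_mul]
  have hcoset : ∀ g : Lˣ, g ∈ Subgroup.zpowers (α ^ (2 * N)) →
      g • (Subgroup.zpowers (α ^ (2 * N)) : Set Lˣ)
        = (Subgroup.zpowers (α ^ (2 * N)) : Set Lˣ) := by
    intro g hg
    ext x
    constructor
    · intro hx
      rw [Set.mem_smul_set] at hx
      obtain ⟨y, hy, rfl⟩ := hx
      rw [husmul, SetLike.mem_coe]
      exact Subgroup.mul_mem _ hg hy
    · intro hx
      rw [Set.mem_smul_set]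
      refine ⟨g⁻¹ * x, ?_, ?_⟩
      · rw [SetLike.mem_coe]
        exact Subgroup.mul_mem _ (Subgroup.inv_mem _ hg) hx
      · rw [husmul]; group
  -- second conjunct
  have hsubset : {b : Lˣ | Algebra.trace K L ((b : L) * ((a⁻¹ : Lˣ) : L) ^ 2) = 0}
      ⊆ (α ^ ((q + 1) / 2)) • (Subgroup.zpowers (α ^ (2 * N)) : Set Lˣ) := by
    intro b hb
    rw [hset] at hb
    obtain ⟨v, -, rfl⟩ := hb
    rw [Set.mem_smul_set_iff_inv_smul_mem, husmul]
    have heq : (α ^ ((q + 1) / 2))⁻¹ *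
        (a ^ 2 * α ^ ((q + 1) / 2) * Units.map (algebraMap K L : K →* L) v)
        = a ^ 2 * Units.map (algebraMap K L : K →* L) v := by
      rw [mul_comm (a ^ 2) (α ^ ((q + 1) / 2)), mul_assoc (α ^ ((q + 1) / 2)) (a ^ 2),
        ← mul_assoc, inv_mul_cancel, one_mul]
    rw [heq, SetLike.mem_coe]
    exact Subgroup.mul_mem _ ha2 (hvmem v)
  refine ⟨hset, hsubset, ?_, ?_⟩
  · intro hev
    obtain ⟨t, ht⟩ := hev
    have h4 : q + 1 = 2 * (2 * N * t) := by rw [← hm, ht]; ring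
    have hexp : (q + 1) / 2 = 2 * N * t := by
      rw [h4, Nat.mul_div_cancel_left _ (by norm_num)]
    rw [hexp, pow_mul]
    exact hcoset _ (Subgroup.pow_mem _ (Subgroup.mem_zpowers _) t)
  · intro hov
    obtain ⟨t, ht⟩ := hov
    have h4 : q + 1 = 2 * (N * (2 * t + 1)) := by rw [← hm, ht]; ring
    have hexp : (q + 1) / 2 = N + 2 * N * t := by
      rw [h4, Nat.mul_div_cancel_left _ (by norm_num)]
      ring
    rw [hexp, pow_add, mul_smul, pow_mul,
      hcoset _ (Subgroup.pow_mem _ (Subgroup.mem_zpowers _) t)]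
end

section
/- For any positive integer N dividing r − 1 and any 0 ≤ i ≤ N − 1, the Gauss period η_i^{(N,r)} = Σ_{x ∈ α^i⟨α^N⟩} ψ(x) satisfies |η_i^{(N,r)} + 1/N| ≤ (N−1)√r / N. -/
open scoped Classical

open Finset in
/-- A homomorphism on a cyclic group sending the generator to a prescribed root of unity. -/
lemma exists_monoidHom_of_gen {G : Type*} [CommGroup G] [Fintype G]
    (α : G) (hα : ∀ x : G, x ∈ Subgroup.zpowers α) (u : ℂˣ)
    (hu : u ^ (orderOf α) = 1) :
    ∃ φ : G →* ℂˣ, ∀ k : ℕ, φ (α ^ k) = u ^ k := by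
  have he : ∀ x : G, ∃ m : ℤ, α ^ m = x := fun x => Subgroup.mem_zpowers_iff.mp (hα x)
  set e : G → ℤ := fun x => (he x).choose with he'
  have hee : ∀ x : G, α ^ (e x) = x := fun x => (he x).choose_spec
  have key : ∀ a b : ℤ, α ^ a = α ^ b → u ^ a = u ^ b := by
    intro a b hab
    have h1 : α ^ (a - b) = 1 := by
      rw [zpow_sub, hab, mul_inv_cancel]
    have h2 : (orderOf α : ℤ) ∣ (a - b) := orderOf_dvd_iff_zpow_eq_one.mpr h1
    obtain ⟨c, hc⟩ := h2
    have h3 : u ^ (a - b) = 1 := by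
      rw [hc, zpow_mul, zpow_natCast, hu, one_zpow]
    calc u ^ a = u ^ (a - b) * u ^ b := by rw [← zpow_add]; ring_nf
    _ = u ^ b := by rw [h3, one_mul]
  refine ⟨{ toFun := fun x => u ^ (e x), map_one' := ?_, map_mul' := ?_ }, ?_⟩
  · have : α ^ (e (1 : G)) = α ^ (0 : ℤ) := by rw [hee]; simp
    simpa using key _ _ this
  · intro x y
    have : α ^ (e (x * y)) = α ^ (e x + e y) := by
      rw [hee, zpow_add, hee, hee]
    simpa [zpow_add] using key _ _ this
  · intro k
    have : α ^ (e (α ^ k)) = α ^ (k : ℤ) := by rw [hee]; simp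
    simpa using key _ _ this

/-- Bound on Gauss periods: `|η_i^{(N,r)} + 1/N| ≤ (N-1)√r / N`, where
`η_i^{(N,r)} = ∑_{x ∈ α^i⟨α^N⟩} ζ^{Tr_{r/p}(x)}`. -/
theorem gauss_period_bound
    (p : ℕ) [Fact p.Prime] (F : Type*) [Field F] [Fintype F]
    [Algebra (ZMod p) F] (ζ : ℂ) (hζ : IsPrimitiveRoot ζ p)
    (α : Fˣ) (hα : ∀ x : Fˣ, x ∈ Subgroup.zpowers α)
    (N : ℕ) (hN : 0 < N) (hNdvd : N ∣ Fintype.card F - 1)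
    (i : ℕ) (hi : i ≤ N - 1) :
    ‖(∑ x ∈ Finset.univ.filter
            (fun x : Fˣ => ∃ k : ℕ, x = α ^ i * (α ^ N) ^ k),
          ζ ^ (Algebra.trace (ZMod p) F (x : F)).val) + 1 / N‖
      ≤ (N - 1) * Real.sqrt (Fintype.card F) / N := by
  classical
  set q := Fintype.card F with hqdef
  have hq2 : 1 < q := Fintype.one_lt_card
  set n := q - 1 with hndef
  have hcardu : Fintype.card Fˣ = n := by rw [Fintype.card_units]
  have hord : orderOf α = n := by
    rw [orderOf_eq_card_of_forall_mem_zpowers hα, Nat.card_eq_fintype_card, hcardu]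
  have hnpos : 0 < n := by omega
  obtain ⟨M, hM⟩ := hNdvd
  have hMpos : 0 < M := by
    rcases Nat.eq_zero_or_pos M with h | h
    · rw [h, mul_zero] at hM; omega
    · exact h
  -- the additive character
  haveI : NeZero p := ⟨(Fact.out : p.Prime).ne_zero⟩
  have hζp : ζ ^ p = 1 := hζ.pow_eq_one
  set ψ : AddChar F ℂ :=
    (AddChar.zmodChar p hζp).compAddMonoidHom
      (Algebra.trace (ZMod p) F).toAddMonoidHom with hψdef
  have hψval : ∀ x : F, ψ x = ζ ^ (Algebra.trace (ZMod p) F x).val := fun x => rfl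
  have hψne : ψ ≠ 1 := by
    intro h
    have htr : ∀ x : F, Algebra.trace (ZMod p) F x = 0 := by
      intro x
      have hx : ψ x = 1 := by rw [h]; rfl
      rw [hψval] at hx
      have hdvd := (hζ.pow_eq_one_iff_dvd _).mp hx
      have hlt := ZMod.val_lt (Algebra.trace (ZMod p) F x)
      have h0 : (Algebra.trace (ZMod p) F x).val = 0 := Nat.eq_zero_of_dvd_of_lt hdvd hlt
      exact (ZMod.val_eq_zero _).mp h0
    have h1 : Algebra.trace (ZMod p) F ≠ 0 := Algebra.trace_ne_zero (ZMod p) F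
    exact h1 (LinearMap.ext htr)
  -- the root of unity and characters
  set ω : ℂ := Complex.exp (2 * Real.pi * Complex.I / N) with hωdef
  have hω : IsPrimitiveRoot ω N := Complex.isPrimitiveRoot_exp N hN.ne'
  have hωunit : IsUnit ω := hω.isUnit hN.ne'
  set ωu : ℂˣ := hωunit.unit with hωudef
  have hωu : (ωu : ℂ) = ω := hωunit.unit_spec
  have hωuN : ωu ^ N = 1 := by
    ext; push_cast [hωu]; exact hω.pow_eq_one
  have hφex : ∀ j : ℕ, ∃ φ : Fˣ →* ℂˣ, ∀ k : ℕ, φ (α ^ k) = (ωu ^ j) ^ k := by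
    intro j
    refine exists_monoidHom_of_gen α hα (ωu ^ j) ?_
    rw [hord, hM, ← pow_mul, mul_comm j, mul_assoc, pow_mul, hωuN, one_pow]
  choose φ hφ using hφex
  set χ : ℕ → MulChar F ℂ := fun j => MulChar.ofUnitHom (φ j) with hχdef
  have hχval : ∀ j k : ℕ, χ j ((α : F) ^ k) = ω ^ (j * k) := by
    intro j k
    have : ((α : F) ^ k) = ((α ^ k : Fˣ) : F) := by push_cast; ring
    rw [this, hχdef]
    simp only [MulChar.ofUnitHom_coe, hφ]
    push_cast [hωu]
    rw [← pow_mul]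
  -- the partial Gauss sums
  set S : ℕ → ℂ := fun j => ∑ k ∈ Finset.range n, ω ^ (j * k) * ψ ((α : F) ^ (i + k))
    with hSdef
  set η : ℂ := ∑ m ∈ Finset.range M, ψ ((α : F) ^ (i + N * m)) with hηdef
  -- every unit is a natural power of α
  have hsurj : ∀ u : Fˣ, ∃ k : ℕ, u = α ^ k := by
    intro u
    obtain ⟨m, hm⟩ := Subgroup.mem_zpowers_iff.mp (hα u)
    refine ⟨(m % (n : ℤ)).toNat, ?_⟩
    have hn0 : (0 : ℤ) < (n : ℤ) := by exact_mod_cast hnpos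
    have hnn : (0 : ℤ) ≤ m % (n : ℤ) := Int.emod_nonneg m hn0.ne'
    have hα1 : α ^ (n : ℤ) = 1 := by
      rw [zpow_natCast, ← hord, pow_orderOf_eq_one]
    have : α ^ (m % (n : ℤ)) = α ^ m := by
      conv_rhs => rw [← Int.emod_add_mul_ediv m (n : ℤ)]
      rw [zpow_add, zpow_mul, hα1, one_zpow, mul_one]
    rw [← zpow_natCast, Int.toNat_of_nonneg hnn, this, hm]
  -- reindexing sums over `Fˣ` by powers of `α`
  have hbij : ∀ (i' : ℕ) (f : Fˣ → ℂ),
      ∑ x : Fˣ, f x = ∑ k ∈ Finset.range n, f (α ^ (i' + k)) := by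
    intro i' f
    have hinj : Set.InjOn (fun k : ℕ => α ^ (i' + k)) (Finset.range n) := by
      intro a ha b hb hab
      simp only [Finset.coe_range, Set.mem_Iio] at ha hb
      have := pow_eq_pow_iff_modEq.mp hab
      rw [hord] at this
      have h2 : a ≡ b [MOD n] := Nat.ModEq.add_left_cancel' i' this
      rwa [Nat.ModEq, Nat.mod_eq_of_lt ha, Nat.mod_eq_of_lt hb] at h2
    have himg : (Finset.range n).image (fun k : ℕ => α ^ (i' + k)) = Finset.univ := by
      apply Finset.eq_univ_of_card
      rw [Finset.card_image_of_injOn hinj, Finset.card_range, hcardu]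
    rw [← himg, Finset.sum_image fun a ha b hb => hinj ha hb]
  -- sum of the additive character over the units
  have hunits : ∑ x : Fˣ, ψ (x : F) = -1 := by
    have h0 : ∑ x : F, ψ x = 0 := AddChar.sum_eq_zero_of_ne_one hψne
    have hsplit0 : ψ 0 + ∑ x ∈ Finset.univ.erase (0 : F), ψ x = ∑ x : F, ψ x :=
      Finset.add_sum_erase _ _ (Finset.mem_univ 0)
    have himg : (Finset.univ : Finset Fˣ).image (fun u : Fˣ => (u : F))
        = Finset.univ.erase (0 : F) := by
      ext x
      simp only [Finset.mem_image, Finset.mem_univ, true_and, Finset.mem_erase, and_true]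
      constructor
      · rintro ⟨u, rfl⟩; exact u.ne_zero
      · intro hx; exact ⟨Units.mk0 x hx, rfl⟩
    have he : ∑ x ∈ Finset.univ.erase (0 : F), ψ x = ∑ x : Fˣ, ψ (x : F) := by
      rw [← himg, Finset.sum_image (fun a _ b _ h => Units.ext h)]
    rw [h0, AddChar.map_zero_eq_one, he] at hsplit0
    linear_combination hsplit0
  have hA : (∑ x ∈ Finset.univ.filter
            (fun x : Fˣ => ∃ k : ℕ, x = α ^ i * (α ^ N) ^ k),
          ζ ^ (Algebra.trace (ZMod p) F (x : F)).val) = η := by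
    have hinj : Set.InjOn (fun m : ℕ => α ^ (i + N * m)) (Finset.range M) := by
      intro a ha b hb hab
      simp only [Finset.coe_range, Set.mem_Iio] at ha hb
      have := pow_eq_pow_iff_modEq.mp hab
      rw [hord] at this
      have h2 : N * a ≡ N * b [MOD n] := Nat.ModEq.add_left_cancel' i this
      rw [hM] at h2
      have h3 : N * (a % M) = N * (b % M) := by
        rw [← Nat.mul_mod_mul_left, ← Nat.mul_mod_mul_left]; exact h2
      have h4 := Nat.eq_of_mul_eq_mul_left hN h3
      rwa [Nat.mod_eq_of_lt ha, Nat.mod_eq_of_lt hb] at h4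
    have hset : Finset.univ.filter (fun x : Fˣ => ∃ k : ℕ, x = α ^ i * (α ^ N) ^ k)
        = (Finset.range M).image (fun m : ℕ => α ^ (i + N * m)) := by
      ext x
      simp only [Finset.mem_filter, Finset.mem_univ, true_and, Finset.mem_image,
        Finset.mem_range]
      constructor
      · rintro ⟨k, rfl⟩
        refine ⟨k % M, Nat.mod_lt _ hMpos, ?_⟩
        have h1 : i + N * (k % M) ≡ i + N * k [MOD n] := by
          rw [hM]
          exact ((Nat.mod_modEq k M).mul_left' (c := N)).add_left i
        have h2 : α ^ (i + N * (k % M)) = α ^ (i + N * k) :=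
          pow_eq_pow_iff_modEq.mpr (by rwa [hord])
        rw [h2, pow_add, pow_mul]
      · rintro ⟨m, hm, rfl⟩
        exact ⟨m, by rw [pow_add, pow_mul]⟩
    rw [hset, Finset.sum_image (fun a ha b hb => hinj ha hb), hηdef]
    refine Finset.sum_congr rfl fun m _ => ?_
    rw [hψval]
    push_cast
    rfl
  have hgeom : ∀ k : ℕ, (∑ j ∈ Finset.range N, ω ^ (j * k)) =
      if N ∣ k then (N : ℂ) else 0 := by
    intro k
    have hrw : ∀ j : ℕ, ω ^ (j * k) = (ω ^ k) ^ j := by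
      intro j; rw [← pow_mul, mul_comm]
    by_cases h : ω ^ k = 1
    · rw [if_pos ((hω.pow_eq_one_iff_dvd k).mp h)]
      simp [hrw, h]
    · rw [if_neg (fun hd => h ((hω.pow_eq_one_iff_dvd k).mpr hd))]
      simp only [hrw]
      rw [geom_sum_eq h]
      have : (ω ^ k) ^ N = 1 := by
        rw [← pow_mul, mul_comm, pow_mul, hω.pow_eq_one, one_pow]
      rw [this, sub_self, zero_div]
  have hB : ∑ j ∈ Finset.range N, S j = N * η := by
    rw [hSdef, Finset.sum_comm]
    have h1 : ∀ k : ℕ, (∑ j ∈ Finset.range N, ω ^ (j * k) * ψ ((α : F) ^ (i + k)))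
        = (if N ∣ k then (N : ℂ) else 0) * ψ ((α : F) ^ (i + k)) := by
      intro k; rw [← Finset.sum_mul, hgeom]
    simp only [h1, ite_mul, zero_mul, Finset.sum_ite, Finset.sum_const_zero, add_zero]
    have hfil : (Finset.range n).filter (fun k => N ∣ k)
        = (Finset.range M).image (fun m => N * m) := by
      ext a
      simp only [Finset.mem_filter, Finset.mem_range, Finset.mem_image]
      constructor
      · rintro ⟨ha, c, rfl⟩
        exact ⟨c, by rw [hM] at ha; exact lt_of_mul_lt_mul_left ha (Nat.zero_le N), rfl⟩
      · rintro ⟨m, hm, rfl⟩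
        exact ⟨by rw [hM]; exact (Nat.mul_lt_mul_left hN).mpr hm, ⟨m, rfl⟩⟩
    rw [hfil, Finset.sum_image (fun a _ b _ h => Nat.eq_of_mul_eq_mul_left hN h),
      hηdef, Finset.mul_sum]
  have hC : S 0 = -1 := by
    rw [hSdef]
    simp only [zero_mul, pow_zero, one_mul, ← Units.val_pow_eq_pow_val]
    rw [← hbij i (fun x : Fˣ => ψ (x : F)), hunits]
  have husum : ∀ f : F → ℂ, ∑ x : F, f x = f 0 + ∑ x : Fˣ, f (x : F) := by
    intro f
    have hsplit0 : f 0 + ∑ x ∈ Finset.univ.erase (0 : F), f x = ∑ x : F, f x :=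
      Finset.add_sum_erase _ _ (Finset.mem_univ 0)
    have himg : (Finset.univ : Finset Fˣ).image (fun u : Fˣ => (u : F))
        = Finset.univ.erase (0 : F) := by
      ext x
      simp only [Finset.mem_image, Finset.mem_univ, true_and, Finset.mem_erase, and_true]
      constructor
      · rintro ⟨u, rfl⟩; exact u.ne_zero
      · intro hx; exact ⟨Units.mk0 x hx, rfl⟩
    rw [← hsplit0, ← himg, Finset.sum_image (fun a _ b _ h => Units.ext h)]
  have hD : ∀ j ∈ Finset.Ico 1 N, ‖S j‖ = Real.sqrt q := by
    intro j hj
    rw [Finset.mem_Ico] at hj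
    set c : F := (α : F) ^ i with hcdef
    have hc : c ≠ 0 := pow_ne_zero _ α.ne_zero
    set ψ' : AddChar F ℂ := ψ.mulShift c with hψ'def
    have hψprim : ψ.IsPrimitive := AddChar.IsPrimitive.of_ne_one hψne
    have hψ'ne : ψ' ≠ 1 := hψprim hc
    have hψ'prim : ψ'.IsPrimitive := AddChar.IsPrimitive.of_ne_one hψ'ne
    have habsω : ‖ω‖ = 1 := Complex.norm_eq_one_of_pow_eq_one hω.pow_eq_one hN.ne'
    have hχvalu : ∀ k : ℕ, χ j ((α ^ k : Fˣ) : F) = ω ^ (j * k) := by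
      intro k
      rw [Units.val_pow_eq_pow_val, hχval]
    have hχunit : ∀ u : Fˣ, ∃ t : ℕ, χ j (↑u) = ω ^ t := by
      intro u
      obtain ⟨k, rfl⟩ := hsurj u
      exact ⟨j * k, hχvalu k⟩
    have hχne : χ j ≠ 1 := by
      intro h
      have h1 : χ j ((α : F) ^ 1) = ω ^ (j * 1) := hχval j 1
      rw [h, pow_one, MulChar.one_apply α.isUnit, mul_one] at h1
      exact hω.pow_ne_one_of_pos_of_lt (Nat.one_le_iff_ne_zero.mp hj.1) hj.2 h1.symm
    have hψ'norm : ∀ a : F, ‖ψ' a‖ = 1 := by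
      intro a
      have : ψ' a = ζ ^ (Algebra.trace (ZMod p) F (c * a)).val := by
        rw [hψ'def, AddChar.mulShift_apply, hψval]
      rw [this, norm_pow,
        Complex.norm_eq_one_of_pow_eq_one hζp (Fact.out : p.Prime).ne_zero, one_pow]
    have hg : S j = gaussSum (χ j) ψ' := by
      rw [gaussSum, husum (fun a => χ j a * ψ' a)]
      rw [MulChar.map_nonunit _ (by simp : ¬ IsUnit (0 : F)), zero_mul, zero_add]
      rw [hbij 0 (fun x : Fˣ => χ j (x : F) * ψ' (x : F))]
      refine Finset.sum_congr rfl fun k _ => ?_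
      simp only [zero_add]
      rw [hχvalu k, hψ'def, AddChar.mulShift_apply, hcdef,
        Units.val_pow_eq_pow_val, ← pow_add]
    have hcong : ∀ a : F, (starRingEnd ℂ) (χ j a * ψ' a) = (χ j)⁻¹ a * ψ'⁻¹ a := by
      intro a
      rw [map_mul]
      congr 1
      · by_cases ha : IsUnit a
        · obtain ⟨u, rfl⟩ := ha
          obtain ⟨t, ht⟩ := hχunit u
          rw [MulChar.inv_apply_eq_inv', ht, ← Complex.inv_eq_conj (by
            rw [norm_pow, habsω, one_pow])]
        · rw [MulChar.map_nonunit _ ha, MulChar.map_nonunit _ ha, map_zero]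
      · rw [AddChar.inv_apply', ← Complex.inv_eq_conj (hψ'norm a)]
    have hconj : (starRingEnd ℂ) (gaussSum (χ j) ψ') = gaussSum (χ j)⁻¹ ψ'⁻¹ := by
      rw [gaussSum, gaussSum, map_sum]
      exact Finset.sum_congr rfl fun a _ => hcong a
    have hgg := gaussSum_mul_gaussSum_eq_card hχne hψ'prim
    rw [← hconj, Complex.mul_conj] at hgg
    have hnsq : Complex.normSq (gaussSum (χ j) ψ') = q := by exact_mod_cast hgg
    rw [hg, Complex.norm_def, hnsq]
  -- putting it together
  have hsplit : (N : ℂ) * η + 1 = ∑ j ∈ Finset.Ico 1 N, S j := by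
    have h1 : ∑ j ∈ Finset.range N, S j = S 0 + ∑ j ∈ Finset.Ico 1 N, S j := by
      rw [Finset.range_eq_Ico, ← Finset.sum_eq_sum_Ico_succ_bot hN]
    rw [hB, hC] at h1
    linear_combination h1
  have hNC : (N : ℂ) ≠ 0 := Nat.cast_ne_zero.mpr hN.ne'
  have habs : ‖(N : ℂ) * η + 1‖ ≤ ((N : ℝ) - 1) * Real.sqrt q := by
    rw [hsplit]
    calc ‖∑ j ∈ Finset.Ico 1 N, S j‖
        ≤ ∑ j ∈ Finset.Ico 1 N, ‖S j‖ := by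
          simpa using (norm_sum_le (Finset.Ico 1 N) S)
      _ = ∑ j ∈ Finset.Ico 1 N, Real.sqrt q := Finset.sum_congr rfl hD
      _ = ((N : ℝ) - 1) * Real.sqrt q := by
          rw [Finset.sum_const, Nat.card_Ico, nsmul_eq_mul]
          congr 1
          have : (1:ℕ) ≤ N := hN
          push_cast [Nat.cast_sub this]
          ring
  rw [hA]
  have key : η + 1 / (N : ℂ) = ((N : ℂ) * η + 1) / N := by
    field_simp
  rw [key, norm_div, Complex.norm_natCast]
  exact div_le_div_of_nonneg_right habs (Nat.cast_nonneg N)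
end
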